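/- arXiv:2002.02515 — 7 statements merged into one kernel-verified Lean document; each statement's English description precedes it below -/
import Mathlib

section
/- Let n be a natural number, let x₀ < x₁ < ⋯ < x_{n+1} be real numbers and y₀, y₁, …, y_{n+1} be real numbers. For 0 ≤ i ≤ n set wᵢ = (y_{i+1} − yᵢ)/(x_{i+1} − xᵢ), and set w_{−1} = 0. Then for every j with 0 ≤ j ≤ n and every t ∈ [x_j, x_{j+1}], one has y_j + w_j·(t − x_j) = y₀ + Σ_{i=0}^{n} (wᵢ − w_{i−1})·σ(t − xᵢ). (This is the wide one-hidden-layer ReLU representation of a continuous piecewise linear function with breakpoints x₁, …, x_n.) -/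
/-- The wide one-hidden-layer ReLU representation of a continuous piecewise linear
function with breakpoints `x 1, …, x n`:  on each piece `[x j, x (j+1)]` the function
`y j + w j * (t - x j)` agrees with `y 0 + ∑ i (w i - w (i-1)) * σ(t - x i)`,
where `σ` is ReLU and `w (-1) = 0`. -/
theorem wide_relu_representation (n : ℕ) (x y w : ℕ → ℝ)
    (hx : ∀ i ≤ n, x i < x (i + 1))
    (hw : ∀ i ≤ n, w i = (y (i + 1) - y i) / (x (i + 1) - x i)) :
    ∀ j ≤ n, ∀ t ∈ Set.Icc (x j) (x (j + 1)),
      y j + w j * (t - x j) =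
        y 0 + ∑ i ∈ Finset.range (n + 1),
          (w i - (if i = 0 then 0 else w (i - 1))) * max (t - x i) 0 := by
  have hmono : ∀ i j : ℕ, i ≤ j → j ≤ n + 1 → x i ≤ x j := by
    intro i j hij hjn
    induction j with
    | zero => simp [Nat.le_zero.mp hij]
    | succ k ih =>
      rcases Nat.lt_or_ge i (k + 1) with h | h
      · exact le_trans (ih (Nat.lt_succ_iff.mp h) (by omega)) (le_of_lt (hx k (by omega)))
      · have : i = k + 1 := le_antisymm hij h
        simp [this]
  intro j hj t ht
  have hkey : ∀ m ≤ n, x m ≤ t →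
      ∑ i ∈ Finset.range (m + 1), (w i - (if i = 0 then 0 else w (i - 1))) * (t - x i)
        = y m - y 0 + w m * (t - x m) := by
    intro m
    induction m with
    | zero => intro _ _; simp
    | succ k ih =>
      intro hm hxt
      rw [Finset.sum_range_succ, ih (by omega) (le_trans (le_of_lt (hx k (by omega))) hxt)]
      have hne : x (k + 1) - x k ≠ 0 := sub_ne_zero.mpr (ne_of_gt (hx k (by omega)))
      have hwk : w k * (x (k + 1) - x k) = y (k + 1) - y k := by
        rw [hw k (by omega)]; field_simp
      simp only [Nat.succ_ne_zero, if_false, Nat.add_sub_cancel]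
      nlinarith [hwk]
  have hsplit : ∑ i ∈ Finset.range (j + 1),
        (w i - (if i = 0 then 0 else w (i - 1))) * max (t - x i) 0
      + ∑ i ∈ Finset.Ico (j + 1) (n + 1),
        (w i - (if i = 0 then 0 else w (i - 1))) * max (t - x i) 0
      = ∑ i ∈ Finset.range (n + 1),
        (w i - (if i = 0 then 0 else w (i - 1))) * max (t - x i) 0 :=
    Finset.sum_range_add_sum_Ico _ (by omega)
  rw [← hsplit]
  have h2 : ∑ i ∈ Finset.Ico (j + 1) (n + 1),
      (w i - (if i = 0 then 0 else w (i - 1))) * max (t - x i) 0 = 0 := by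
    apply Finset.sum_eq_zero
    intro i hi
    simp only [Finset.mem_Ico] at hi
    have : t ≤ x i := le_trans ht.2 (hmono (j + 1) i hi.1 (by omega))
    have : max (t - x i) 0 = 0 := max_eq_right (by linarith)
    simp [this]
  have h1 : ∑ i ∈ Finset.range (j + 1),
        (w i - (if i = 0 then 0 else w (i - 1))) * max (t - x i) 0
      = ∑ i ∈ Finset.range (j + 1), (w i - (if i = 0 then 0 else w (i - 1))) * (t - x i) := by
    apply Finset.sum_congr rfl
    intro i hi
    simp only [Finset.mem_range] at hi
    have hxi : x i ≤ t := le_trans (hmono i j (by omega) (by omega)) ht.1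
    rw [max_eq_left (by linarith)]
  rw [h1, h2, hkey j hj ht.1]
  ring
end

section
/- Let n be a natural number, let x₀ < x₁ < ⋯ < x_{n+1} be real numbers and y₀, …, y_{n+1} be real numbers. For 0 ≤ i ≤ n set wᵢ = (y_{i+1} − yᵢ)/(x_{i+1} − xᵢ), set w_{−1} = 0, and assume wᵢ ≠ w_{i−1} for every 0 ≤ i ≤ n. Define R₀(t) = σ(|w₀ − w_{−1}|·(t − x₀)) and recursively R_{i+1}(t) = σ(|w_{i+1} − wᵢ|·(Rᵢ(t)/|wᵢ − w_{i−1}| − x_{i+1} + xᵢ)) for 0 ≤ i ≤ n − 1. Then for every j with 0 ≤ j ≤ n and every t ∈ [x_j, x_{j+1}], one has y_j + w_j·(t − x_j) = y₀ + Σ_{i=0}^{n} sgn(wᵢ − w_{i−1})·Rᵢ(t), where sgn(a) = 1 if a > 0 and sgn(a) = −1 if a < 0. (This is the one-neuron-wide deep ReLU representation of a continuous piecewise linear function, dual to the wide representation.) -/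
/-!
Dividing the recursion by `|wᵢ - wᵢ₋₁|` turns it into `rᵢ = σ(rᵢ₋₁ - (xᵢ - xᵢ₋₁))`, and since
`σ(σ(u) - c) = σ(u - c)` for `c ≥ 0`, the deep network computes the ramps of the wide one:
`Rᵢ(t) = |wᵢ - wᵢ₋₁| · σ(t - xᵢ)`. Hence the right-hand side is `y₀ + ∑ᵢ (wᵢ - wᵢ₋₁) σ(t - xᵢ)`,
which on `[xⱼ, xⱼ₊₁]` equals `y₀ + ∑_{i ≤ j} (wᵢ - wᵢ₋₁)(t - xᵢ)`, and summation by parts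
turns this into `yⱼ + wⱼ (t - xⱼ)`.
-/

open Finset

lemma Real.sign_mul_abs (a : ℝ) : Real.sign a * |a| = a := by
  rcases lt_trichotomy a 0 with h | h | h
  · rw [Real.sign_of_neg h, abs_of_neg h]; ring
  · simp [h]
  · rw [Real.sign_of_pos h, abs_of_pos h]; ring

lemma max_sub_max_zero {α : Type*} [AddCommGroup α] [LinearOrder α] [IsOrderedAddMonoid α]
    {c : α} (hc : 0 ≤ c) (u : α) : max (max u 0 - c) 0 = max (u - c) 0 := by
  rcases le_total u 0 with h | h
  · rw [max_eq_right h, max_eq_right (sub_nonpos.2 hc), max_eq_right (sub_nonpos.2 (h.trans hc))]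
  · rw [max_eq_left h]

lemma mul_max_zero_of_nonneg {α : Type*} [Semiring α] [LinearOrder α] [PosMulMono α]
    {a : α} (ha : 0 ≤ a) (u : α) : max (a * u) 0 = a * max u 0 := by
  rw [mul_max_of_nonneg _ _ ha, mul_zero]

lemma monotoneOn_Iic_of_le_succ {β : Type*} [Preorder β] {n : ℕ} {x : ℕ → β}
    (hx : ∀ i ≤ n, x i ≤ x (i + 1)) : MonotoneOn x (Set.Iic (n + 1)) :=
  monotoneOn_of_le_add_one Set.ordConnected_Iic fun i _ _ hi => hx i (by simpa using hi)

lemma ramp_eq_mul_relu {n : ℕ} {a x : ℕ → ℝ} {R : ℕ → ℝ → ℝ}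
    (ha : ∀ i ≤ n, 0 < a i) (hx : ∀ i, i + 1 ≤ n → x i ≤ x (i + 1))
    (hR0 : ∀ t, R 0 t = max (a 0 * (t - x 0)) 0)
    (hRs : ∀ i, i + 1 ≤ n → ∀ t,
      R (i + 1) t = max (a (i + 1) * (R i t / a i - x (i + 1) + x i)) 0) :
    ∀ i ≤ n, ∀ t, R i t = a i * max (t - x i) 0 := by
  intro i hi t
  induction i with
  | zero => rw [hR0, mul_max_zero_of_nonneg (ha 0 hi).le]
  | succ i ih =>
    rw [hRs i hi, ih (by omega), mul_div_cancel_left₀ _ (ha i (by omega)).ne',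
      mul_max_zero_of_nonneg (ha (i + 1) hi).le, sub_add,
      max_sub_max_zero (sub_nonneg.2 (hx i hi)), sub_sub_sub_cancel_right]

def slopeJump (w : ℕ → ℝ) (i : ℕ) : ℝ := w i - if i = 0 then 0 else w (i - 1)

lemma slopeJump_succ (w : ℕ → ℝ) (i : ℕ) : slopeJump w (i + 1) = w (i + 1) - w i := by
  simp [slopeJump]

lemma sum_slopeJump_mul (w x : ℕ → ℝ) (t : ℝ) (j : ℕ) :
    ∑ i ∈ range (j + 1), slopeJump w i * (t - x i) =
      w j * (t - x j) + ∑ i ∈ range j, w i * (x (i + 1) - x i) := by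
  induction j with
  | zero => simp [slopeJump]
  | succ j ih =>
    rw [sum_range_succ, ih, slopeJump_succ, sum_range_succ]
    ring

lemma sum_mul_relu_of_mem_Icc {n j : ℕ} {x c : ℕ → ℝ} {t : ℝ}
    (hx : MonotoneOn x (Set.Iic (n + 1))) (hj : j ≤ n) (ht : t ∈ Set.Icc (x j) (x (j + 1))) :
    ∑ i ∈ range (n + 1), c i * max (t - x i) 0 = ∑ i ∈ range (j + 1), c i * (t - x i) := by
  have hle {a b : ℕ} (hab : a ≤ b) (hb : b ≤ n + 1) : x a ≤ x b :=
    hx (Set.mem_Iic.2 (hab.trans hb)) (Set.mem_Iic.2 hb) hab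
  symm
  refine sum_subset_zero_on_sdiff (range_subset_range.2 (by omega)) ?_ ?_
  · intro i hi
    obtain ⟨hin, hij⟩ := mem_sdiff.1 hi
    rw [mem_range, not_lt] at hij
    rw [max_eq_right (sub_nonpos.2 (ht.2.trans (hle hij (mem_range.1 hin).le))), mul_zero]
  · intro i hi
    rw [max_eq_left (sub_nonneg.2 ((hle (by simpa using hi) (by omega)).trans ht.1))]

/-- The one-neuron-wide deep ReLU representation of a continuous piecewise linear
function, dual to the wide representation.  Here `σ(u) = max u 0` is ReLU,
`R` is the recursively defined sequence of ramps, `w (-1) = 0`, and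
`Real.sign a = 1` for `a > 0`, `-1` for `a < 0`. -/
theorem deep_relu_representation (n : ℕ) (x y w : ℕ → ℝ) (R : ℕ → ℝ → ℝ)
    (hx : ∀ i ≤ n, x i < x (i + 1))
    (hw : ∀ i ≤ n, w i = (y (i + 1) - y i) / (x (i + 1) - x i))
    (hne : ∀ i ≤ n, w i ≠ (if i = 0 then 0 else w (i - 1)))
    (hR0 : ∀ t : ℝ, R 0 t = max (|w 0 - 0| * (t - x 0)) 0)
    (hRs : ∀ i : ℕ, i + 1 ≤ n → ∀ t : ℝ,
      R (i + 1) t = max (|w (i + 1) - w i| *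
        (R i t / |w i - (if i = 0 then 0 else w (i - 1))| - x (i + 1) + x i)) 0) :
    ∀ j ≤ n, ∀ t ∈ Set.Icc (x j) (x (j + 1)),
      y j + w j * (t - x j) =
        y 0 + ∑ i ∈ Finset.range (n + 1),
          Real.sign (w i - (if i = 0 then 0 else w (i - 1))) * R i t := by
  intro j hj t ht
  have hramp := ramp_eq_mul_relu (a := fun i => |slopeJump w i|)
    (fun i hi => abs_pos.2 (sub_ne_zero.2 (hne i hi))) (fun i hi => (hx i (by omega)).le)
    (by simpa [slopeJump] using hR0) fun i hi t => by rw [slopeJump_succ]; exact hRs i hi t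
  have hsecant : ∀ i < j, w i * (x (i + 1) - x i) = y (i + 1) - y i := fun i hi => by
    rw [hw i (by omega), div_mul_cancel₀ _ (sub_ne_zero.2 (hx i (by omega)).ne')]
  calc y j + w j * (t - x j)
      = y 0 + (w j * (t - x j) + ∑ i ∈ range j, w i * (x (i + 1) - x i)) := by
        rw [sum_congr rfl fun i hi => hsecant i (mem_range.1 hi), sum_range_sub]; ring
    _ = y 0 + ∑ i ∈ range (j + 1), slopeJump w i * (t - x i) := by rw [sum_slopeJump_mul]
    _ = y 0 + ∑ i ∈ range (n + 1), slopeJump w i * max (t - x i) 0 := by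
        rw [sum_mul_relu_of_mem_Icc (monotoneOn_Iic_of_le_succ fun i hi => (hx i hi).le) hj ht]
    _ = _ := by
        refine congrArg (y 0 + ·) (sum_congr rfl fun i hi => ?_)
        change _ = Real.sign (slopeJump w i) * _
        rw [hramp i (Nat.lt_succ_iff.1 (mem_range.1 hi)) t, ← mul_assoc, Real.sign_mul_abs]
end

section
/- Let Ω be a set, n ≥ 1 a natural number, and P : Fin n → Ω → ℝ a family of functions with 0 ≤ Pᵢ(x) ≤ 1 for all i and x, whose supports {x : Pᵢ(x) ≠ 0} are pairwise disjoint. Then for every x ∈ Ω, 1 − σ( Σ_{i} (1 − Pᵢ(x)) − (n − 1) ) = Σ_{i} Pᵢ(x). (This identity shows the wide network, which negates the thresholded sum of the negated soft rules with threshold n − 1, computes exactly the same function as the deep network, which sums the soft rules.) -/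
/-- For a family of soft rules `P i : Ω → [0,1]` with pairwise disjoint supports,
the wide network (which negates the thresholded sum of the negated soft rules with
threshold `n - 1`) computes the same function as the deep network (which sums the
soft rules).  Here `σ(u) = max u 0` is ReLU. -/
theorem wide_eq_deep_soft_rules {Ω : Type*} (n : ℕ) (hn : 1 ≤ n)
    (P : Fin n → Ω → ℝ)
    (h0 : ∀ i x, 0 ≤ P i x) (h1 : ∀ i x, P i x ≤ 1)
    (hdisj : Pairwise fun i j => Disjoint {x | P i x ≠ 0} {x | P j x ≠ 0})
    (x : Ω) :
    1 - max (∑ i, (1 - P i x) - ((n : ℝ) - 1)) 0 = ∑ i, P i x := by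
  have hsum_le : ∑ i, P i x ≤ 1 := by
    by_cases h : ∃ i, P i x ≠ 0
    · obtain ⟨i, hi⟩ := h
      have : ∑ j, P j x = P i x := by
        apply Finset.sum_eq_single
        · intro j _ hj
          by_contra hj0
          exact (hdisj hj).le_bot ⟨hj0, hi⟩
        · intro h'; exact absurd (Finset.mem_univ i) h'
      rw [this]; exact h1 i x
    · push_neg at h
      simp [h]
  have hsum_nonneg : 0 ≤ ∑ i, P i x := Finset.sum_nonneg fun i _ => h0 i x
  have key : ∑ i, (1 - P i x) - ((n : ℝ) - 1) = 1 - ∑ i, P i x := by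
    rw [Finset.sum_sub_distrib]
    simp
  rw [key, max_eq_left (by linarith)]
  ring
end

section
/- Let B ≥ 1, let S ⊆ [−B, B]² be a 2-simplex (the convex hull of three affinely independent points of ℝ²), let ℓ : ℝ² → ℝ be an affine function, and let f : ℝ² → ℝ be defined by f(x) = ℓ(x) for x ∈ S and f(x) = 0 for x ∉ S. Then for every δ > 0 there exist N ≤ 9, affine functions h₁ⱼ, h₂ⱼ : ℝ² → ℝ, strictly positive reals μⱼ, and real coefficients cⱼ (1 ≤ j ≤ N) such that the Lebesgue measure of { x ∈ [−B, B]² : f(x) ≠ ℓ(x) + Σ_{j=1}^{N} cⱼ·σ(h₁ⱼ(x) − μⱼ·σ(h₂ⱼ(x))) } is less than δ. (This is the wide-network half of the two-dimensional simplex representation lemma: the affine function ℓ and at most nine two-dimensional fan-shaped terms represent f up to arbitrarily small measure.) -/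
/-!
Let λ₀, λ₁, λ₂ be the barycentric coordinates of the simplex and read indices mod 3. Once
every |λₘ| exceeds a threshold η and M, μ are large enough (depending on η and on bounds for ℓ
and the λₘ on the box), the pair of fan terms σ(M λₘ₊₁ - μ σ(λₘ)) - σ(ℓ + M λₘ₊₁ - μ σ(λₘ))
equals -ℓ where λₘ < 0 < λₘ₊₁ and vanishes elsewhere. Since λ₀ + λ₁ + λ₂ = 1, outside the
simplex the cyclic sign pattern of (λ₀, λ₁, λ₂) changes from - to + exactly once, so ℓ plus
the three pairs equals f away from the strips |λₘ| ≤ η. Each strip meets the box in a set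
whose measure tends to 0 with η, because the zero set of λₘ is a line.
-/

open MeasureTheory

/-- A function `(Fin D → ℝ) → ℝ` is affine if it is of the form
`x ↦ ∑ d, w d * x d + r`. -/
def IsAffineFn {D : ℕ} (g : (Fin D → ℝ) → ℝ) : Prop :=
  ∃ (w : Fin D → ℝ) (r : ℝ), ∀ x, g x = (∑ d, w d * x d) + r

open Filter Topology

theorem isAffineFn_iff_exists_affineMap {D : ℕ} {g : (Fin D → ℝ) → ℝ} :
    IsAffineFn g ↔ ∃ φ : (Fin D → ℝ) →ᵃ[ℝ] ℝ, ⇑φ = g := by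
  constructor
  · rintro ⟨w, r, hg⟩
    refine ⟨(∑ d, w d • LinearMap.proj d).toAffineMap + AffineMap.const ℝ _ r, ?_⟩
    ext x
    simp [hg]
  · rintro ⟨φ, rfl⟩
    refine ⟨fun d => φ.linear (fun j => if d = j then 1 else 0), φ 0, fun x => ?_⟩
    have h := φ.map_vadd 0 x
    rw [vadd_eq_add, add_zero, vadd_eq_add] at h
    rw [h, LinearMap.pi_apply_eq_sum_univ φ.linear x]
    simp [smul_eq_mul, mul_comm]

theorem tendsto_measure_inter_abs_le_nhdsGT {α : Type*} [MeasurableSpace α] {μ : Measure α}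
    {K : Set α} (hK : MeasurableSet K) (hKμ : μ K ≠ ⊤) {g : α → ℝ} (hg : Measurable g)
    (hg0 : μ (g ⁻¹' {0}) = 0) :
    Tendsto (fun η => μ (K ∩ {x | |g x| ≤ η})) (𝓝[>] 0) (𝓝 0) := by
  have hinter : ⋂ η > (0 : ℝ), K ∩ {x | |g x| ≤ η} = K ∩ g ⁻¹' {0} := by
    ext x
    simp only [Set.mem_iInter, Set.mem_inter_iff, Set.mem_ofPred_eq, Set.mem_preimage,
      Set.mem_singleton_iff]
    refine ⟨fun h => ⟨(h 1 one_pos).1, abs_eq_zero.mp (le_antisymm ?_ (abs_nonneg _))⟩,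
      fun h η hη => ⟨h.1, by rw [h.2, abs_zero]; exact hη.le⟩⟩
    exact le_of_forall_pos_le_add fun ε hε => by simpa using (h ε hε).2
  have := tendsto_measure_biInter_gt (μ := μ) (s := fun η : ℝ => K ∩ {x | |g x| ≤ η}) (a := 0)
    (fun η _ => (hK.inter (measurableSet_le hg.abs measurable_const)).nullMeasurableSet)
    (fun i j _ hij => Set.inter_subset_inter_right _ fun x hx => le_trans hx hij)
    ⟨1, one_pos, ne_top_of_le_ne_top hKμ (measure_mono Set.inter_subset_left)⟩
  rwa [hinter, measure_mono_null Set.inter_subset_right hg0] at this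

section Haar

variable {E : Type*} [NormedAddCommGroup E] [NormedSpace ℝ E] [MeasurableSpace E] [BorelSpace E]
  [FiniteDimensional ℝ E] (μ : Measure E) [μ.IsAddHaarMeasure]

theorem AffineMap.addHaar_preimage_zero (φ : E →ᵃ[ℝ] ℝ) {x₀ : E} (hx₀ : φ x₀ ≠ 0) :
    μ (φ ⁻¹' {0}) = 0 := by
  have hne : (affineSpan ℝ {(0 : ℝ)}).comap φ ≠ ⊤ := fun h => hx₀ <| by
    simpa [AffineSubspace.coe_affineSpan_singleton] using
      (h ▸ AffineSubspace.mem_top ℝ E x₀ : x₀ ∈ (affineSpan ℝ {(0 : ℝ)}).comap φ)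
  simpa [AffineSubspace.coe_comap, AffineSubspace.coe_affineSpan_singleton] using
    Measure.addHaar_affineSubspace μ _ hne

theorem AffineBasis.exists_pos_sum_addHaar_inter_abs_coord_le_lt {ι : Type*} [Fintype ι]
    (b : AffineBasis ι ℝ E) {K : Set E} (hK : IsCompact K) {ε : ENNReal} (hε : 0 < ε) :
    ∃ η > 0, ∑ i, μ (K ∩ {x | |b.coord i x| ≤ η}) < ε := by
  have := tendsto_finsetSum Finset.univ fun i _ =>
    tendsto_measure_inter_abs_le_nhdsGT hK.measurableSet (hK.measure_lt_top (μ := μ)).ne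
      (b.coord i).continuous_of_finiteDimensional.measurable
      ((b.coord i).addHaar_preimage_zero μ (x₀ := b i) (by simp))
  rw [Finset.sum_const_zero] at this
  exact ((eventually_mem_nhdsWithin (a := (0 : ℝ)) (s := Set.Ioi 0)).and
    (this.eventually (gt_mem_nhds hε))).exists

end Haar

theorem max_sub_max_fan_eq_ite {e p q M μ η : ℝ} (hη : 0 ≤ η) (hM : 0 ≤ M) (hμ : 0 ≤ μ)
    (he : |e| ≤ M * η) (heq : |e| + M * |q| ≤ μ * η) (hp : η < |p|) (hq : η < |q|) :
    max (M * q - μ * max p 0) 0 - max (e + M * q - μ * max p 0) 0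
      = if p < 0 ∧ 0 < q then -e else 0 := by
  have := neg_abs_le e
  have := le_abs_self e
  rcases lt_abs.mp hp with hp | hp
  · have : μ * η ≤ μ * p := mul_le_mul_of_nonneg_left hp.le hμ
    have : M * q ≤ M * |q| := mul_le_mul_of_nonneg_left (le_abs_self q) hM
    rw [max_eq_left (by linarith : 0 ≤ p), max_eq_right (by linarith), max_eq_right (by linarith),
      if_neg (by rintro ⟨h, -⟩; linarith)]
    ring
  rw [max_eq_right (by linarith : p ≤ 0), mul_zero, sub_zero, sub_zero]
  rcases lt_abs.mp hq with hq | hq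
  · have : M * η ≤ M * q := mul_le_mul_of_nonneg_left hq.le hM
    rw [max_eq_left (by linarith), max_eq_left (by linarith), if_pos ⟨by linarith, by linarith⟩]
    ring
  · have : M * q ≤ M * -η := mul_le_mul_of_nonneg_left (by linarith) hM
    rw [max_eq_right (by linarith), max_eq_right (by linarith), if_neg (by rintro ⟨-, h⟩; linarith)]
    ring

theorem ite_forall_nonneg_eq_add_sum_cyclic {a : Fin 3 → ℝ} (ha : ∀ m, a m ≠ 0)
    (hsum : 0 < ∑ m, a m) (e : ℝ) :
    (if ∀ m, 0 ≤ a m then e else 0) =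
      e + ∑ m : Fin 3, if a m < 0 ∧ 0 < a (m + 1) then -e else 0 := by
  simp only [Fin.sum_univ_three, Fin.forall_fin_succ, Fin.isValue] at hsum ⊢
  rcases (ha 0).lt_or_gt with h0 | h0 <;> rcases (ha 1).lt_or_gt with h1 | h1 <;>
    rcases (ha 2).lt_or_gt with h2 | h2 <;>
    simp [h0, h1, h2, h0.le, h1.le, h2.le, h0.not_gt, h1.not_gt, h2.not_gt]
  -- only the case of three negative coordinates is left, and `hsum` rules it out
  linarith

theorem ite_forall_nonneg_eq_add_sum_fan {a : Fin 3 → ℝ} (hsum : 0 < ∑ m, a m) {e M μ η : ℝ}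
    (hη : 0 ≤ η) (hM : 0 ≤ M) (hμ : 0 ≤ μ) (he : |e| ≤ M * η)
    (hμη : ∀ m, |e| + M * |a m| ≤ μ * η) (ha : ∀ m, η < |a m|) :
    (if ∀ m, 0 ≤ a m then e else 0) = e + ∑ m : Fin 3,
      (max (M * a (m + 1) - μ * max (a m) 0) 0 - max (e + M * a (m + 1) - μ * max (a m) 0) 0) := by
  rw [ite_forall_nonneg_eq_add_sum_cyclic (fun m => abs_pos.mp (hη.trans_lt (ha m))) hsum]
  congr 1
  exact Finset.sum_congr rfl fun m _ =>
    (max_sub_max_fan_eq_ite hη hM hμ he (hμη (m + 1)) (ha m) (ha (m + 1))).symm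

section Fan

variable {E : Type*} [AddCommGroup E] [Module ℝ E] (b : AffineBasis (Fin 3) ℝ E)

/- Entries `2m` and `2m + 1` of `fanH₁`, `fanH₂`, `fanCoeff` form the pair of fan terms
`σ(M λₘ₊₁ - μ σ(λₘ)) - σ(φ + M λₘ₊₁ - μ σ(λₘ))` attached to the cyclic edge `m → m + 1`. -/
noncomputable def AffineBasis.fanH₁ (φ : E →ᵃ[ℝ] ℝ) (M : ℝ) : Fin 6 → E →ᵃ[ℝ] ℝ :=
  ![M • b.coord 1, φ + M • b.coord 1, M • b.coord 2, φ + M • b.coord 2,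
    M • b.coord 0, φ + M • b.coord 0]

noncomputable def AffineBasis.fanH₂ : Fin 6 → E →ᵃ[ℝ] ℝ :=
  ![b.coord 0, b.coord 0, b.coord 1, b.coord 1, b.coord 2, b.coord 2]

def fanCoeff : Fin 6 → ℝ := ![1, -1, 1, -1, 1, -1]

theorem AffineBasis.indicator_convexHull_eq_add_sum_fan (φ : E →ᵃ[ℝ] ℝ) {M μ η : ℝ} (x : E)
    (hη : 0 ≤ η) (hM : 0 ≤ M) (hμ : 0 ≤ μ) (hφ : |φ x| ≤ M * η)
    (hμη : ∀ m, |φ x| + M * |b.coord m x| ≤ μ * η) (hx : ∀ m, η < |b.coord m x|) :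
    (convexHull ℝ (Set.range b)).indicator φ x =
      φ x + ∑ j, fanCoeff j * max (b.fanH₁ φ M j x - μ * max (b.fanH₂ j x) 0) 0 := by
  classical
  have hsum : 0 < ∑ m, b.coord m x := by simp [b.sum_coord_apply_eq_one]
  rw [Set.indicator_apply, b.convexHull_eq_nonneg_coord, Set.mem_ofPred_eq]
  convert ite_forall_nonneg_eq_add_sum_fan hsum hη hM hμ hφ hμη hx using 2
  simp [Fin.sum_univ_six, Fin.sum_univ_three, fanH₁, fanH₂, fanCoeff]
  ring

end Fan

theorem IsCompact.exists_fan_scales {E ι : Type*} [TopologicalSpace E] [Fintype ι] {K : Set E}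
    (hK : IsCompact K) {e : E → ℝ} {a : ι → E → ℝ} (he : ContinuousOn e K)
    (ha : ∀ i, ContinuousOn (a i) K) {η : ℝ} (hη : 0 < η) :
    ∃ M μ : ℝ, 0 ≤ M ∧ 0 < μ ∧ ∀ x ∈ K, |e x| ≤ M * η ∧ ∀ i, |e x| + M * |a i x| ≤ μ * η := by
  obtain ⟨L, hL⟩ := hK.exists_bound_of_continuousOn he
  obtain ⟨Λ, hΛ⟩ := hK.exists_bound_of_continuousOn (continuousOn_pi.mpr ha)
  refine ⟨|L| / η, (|L| + |L| / η * |Λ| + 1) / η, by positivity, by positivity, fun x hx => ?_⟩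
  rw [div_mul_cancel₀ _ hη.ne', div_mul_cancel₀ _ hη.ne']
  have heL : |e x| ≤ |L| := (hL x hx).trans (le_abs_self L)
  refine ⟨heL, fun i => ?_⟩
  have haΛ : |a i x| ≤ |Λ| :=
    ((norm_le_pi_norm (fun i => a i x) i).trans (hΛ x hx)).trans (le_abs_self Λ)
  have := mul_le_mul_of_nonneg_left haΛ (by positivity : 0 ≤ |L| / η)
  linarith

theorem simplex_wide_representation_2d_general (B : ℝ)
    (v : Fin 3 → (Fin 2 → ℝ)) (hv : AffineIndependent ℝ v)
    (S : Set (Fin 2 → ℝ)) (hS : S = convexHull ℝ (Set.range v))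
    (ℓ f : (Fin 2 → ℝ) → ℝ) (hℓ : IsAffineFn ℓ)
    (hf : f = S.indicator ℓ) :
    ∀ δ > (0 : ℝ), ∃ N : ℕ, N ≤ 9 ∧
      ∃ (h₁ h₂ : Fin N → (Fin 2 → ℝ) → ℝ) (μ c : Fin N → ℝ),
        (∀ j, IsAffineFn (h₁ j)) ∧ (∀ j, IsAffineFn (h₂ j)) ∧ (∀ j, 0 < μ j) ∧
        volume {x : Fin 2 → ℝ | x ∈ Set.Icc (fun _ => -B) (fun _ => (B : ℝ)) ∧
            f x ≠ ℓ x + ∑ j, c j * max (h₁ j x - μ j * max (h₂ j x) 0) 0} <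
          ENNReal.ofReal δ := by
  intro δ hδ
  obtain ⟨φ, rfl⟩ := isAffineFn_iff_exists_affineMap.mp hℓ
  let b : AffineBasis (Fin 3) ℝ (Fin 2 → ℝ) :=
    ⟨v, hv, hv.affineSpan_eq_top_iff_card_eq_finrank_add_one.mpr (by simp)⟩
  set K : Set (Fin 2 → ℝ) := Set.Icc (fun _ => -B) (fun _ => B)
  have hK : IsCompact K := isCompact_Icc
  obtain ⟨η, hη, hstrips⟩ :=
    b.exists_pos_sum_addHaar_inter_abs_coord_le_lt volume hK (ENNReal.ofReal_pos.mpr hδ)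
  obtain ⟨M, μ, hM, hμ, hbound⟩ := hK.exists_fan_scales
    φ.continuous_of_finiteDimensional.continuousOn
    (fun m => (b.coord m).continuous_of_finiteDimensional.continuousOn) hη
  refine ⟨6, by norm_num, fun j => b.fanH₁ φ M j, fun j => b.fanH₂ j, fun _ => μ, fanCoeff,
    fun j => isAffineFn_iff_exists_affineMap.mpr ⟨_, rfl⟩,
    fun j => isAffineFn_iff_exists_affineMap.mpr ⟨_, rfl⟩, fun _ => hμ, ?_⟩
  calc _ ≤ volume (⋃ m, K ∩ {x | |b.coord m x| ≤ η}) := measure_mono ?_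
    _ ≤ ∑ m, volume (K ∩ {x | |b.coord m x| ≤ η}) := measure_iUnion_fintype_le _ _
    _ < ENNReal.ofReal δ := hstrips
  rintro x ⟨hxK, hne⟩
  by_contra hx
  simp only [Set.mem_iUnion, Set.mem_inter_iff, Set.mem_ofPred_eq, not_exists, not_and,
    not_le] at hx
  rw [hf, hS] at hne
  exact hne (b.indicator_convexHull_eq_add_sum_fan φ x hη.le hM hμ.le (hbound x hxK).1
    (hbound x hxK).2 fun m => hx m hxK)

/-- The wide-network half of the two-dimensional simplex representation lemma:
the affine function `ℓ` and at most nine two-dimensional fan-shaped terms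
`σ(h₁ⱼ(x) - μⱼ·σ(h₂ⱼ(x)))` represent, up to arbitrarily small Lebesgue measure,
the function `f` equal to `ℓ` on a 2-simplex `S ⊆ [-B, B]²` and `0` outside.
Here `σ(u) = max u 0` is ReLU. -/
theorem simplex_wide_representation_2d (B : ℝ) (hB : 1 ≤ B)
    (v : Fin 3 → (Fin 2 → ℝ)) (hv : AffineIndependent ℝ v)
    (S : Set (Fin 2 → ℝ)) (hS : S = convexHull ℝ (Set.range v))
    (hSB : S ⊆ Set.Icc (fun _ => -B) (fun _ => B))
    (ℓ f : (Fin 2 → ℝ) → ℝ) (hℓ : IsAffineFn ℓ)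
    (hf : f = S.indicator ℓ) :
    ∀ δ > (0 : ℝ), ∃ N : ℕ, N ≤ 9 ∧
      ∃ (h₁ h₂ : Fin N → (Fin 2 → ℝ) → ℝ) (μ c : Fin N → ℝ),
        (∀ j, IsAffineFn (h₁ j)) ∧ (∀ j, IsAffineFn (h₂ j)) ∧ (∀ j, 0 < μ j) ∧
        volume {x : Fin 2 → ℝ | x ∈ Set.Icc (fun _ => -B) (fun _ => (B : ℝ)) ∧
            f x ≠ ℓ x + ∑ j, c j * max (h₁ j x - μ j * max (h₂ j x) 0) 0} <
          ENNReal.ofReal δ :=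
  simplex_wide_representation_2d_general B v hv S hS ℓ f hℓ hf
end

section
/- Let B ≥ 1, let S ⊆ [−B, B]² be a 2-simplex (the convex hull of three affinely independent points of ℝ²), let ℓ : ℝ² → ℝ be an affine function, and let f : ℝ² → ℝ be defined by f(x) = ℓ(x) for x ∈ S and f(x) = 0 for x ∉ S. Then for every δ > 0 there exist, for k = 1, 2, 3, real numbers ρₖ, γ₁ₖ, γ₂ₖ, γ₃ₖ, strictly positive reals μₖ, and affine functions hₖ, hₖ′, hₖ″ : ℝ² → ℝ, such that, writing Fₖ(x) = σ(hₖ(x) − μₖ·σ(hₖ″(x))) and Fₖ′(x) = σ(hₖ′(x) − μₖ·σ(hₖ″(x))), the function g(x) = Σ_{k=1}^{3} ρₖ·σ(γ₁ₖ·Fₖ(x) + γ₂ₖ·Fₖ′(x) + γ₃ₖ) satisfies: the Lebesgue measure of { x ∈ [−B, B]² : g(x) ≠ f(x) } is less than δ. (This is the deep-network half of the two-dimensional simplex representation lemma.) -/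
open MeasureTheory

/-!
Let `L₀, L₁, L₂` be the barycentric coordinates of the simplex, so that `S = {L₀, L₁, L₂ ≥ 0}`.
Away from the strips `|Lᵢ| < ε`, which have small measure inside the box because the lines
`Lᵢ = 0` are null, the unit `σ(σ(u - μσ(-L₁)) - μσ(-L₂ - μσ(-L₁)))` equals `σ(u)` on
`{L₁, L₂ ≥ 0}` and vanishes elsewhere once `μ` is large. Applying it to `u = ℓ + M L₀` and to
`u = M L₀` with `M` large and subtracting gives `ℓ · 1[L₀ ≥ 0]` on `{L₁, L₂ ≥ 0}` and `0` outside.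
-/

open Filter Topology ENNReal

theorem IsAffineFn.add {D : ℕ} {f g : (Fin D → ℝ) → ℝ} (hf : IsAffineFn f) (hg : IsAffineFn g) :
    IsAffineFn (f + g) := by
  obtain ⟨w, r, hw⟩ := hf
  obtain ⟨w', r', hw'⟩ := hg
  exact ⟨w + w', r + r', fun x => by
    simp only [Pi.add_apply, hw, hw', add_mul, Finset.sum_add_distrib]; ring⟩

theorem IsAffineFn.continuous {D : ℕ} {f : (Fin D → ℝ) → ℝ} (hf : IsAffineFn f) :
    Continuous f := by
  obtain ⟨w, r, hw⟩ := hf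
  rw [funext hw]
  fun_prop

theorem AffineMap.isAffineFn {D : ℕ} (φ : (Fin D → ℝ) →ᵃ[ℝ] ℝ) : IsAffineFn φ := by
  refine ⟨fun d => φ.linear fun j => if d = j then 1 else 0, φ 0, fun x => ?_⟩
  rw [congrFun φ.decomp x, Pi.add_apply, LinearMap.pi_apply_eq_sum_univ]
  simp only [smul_eq_mul, mul_comm]

def AffineIndependent.affineBasis {n : ℕ} {v : Fin (n + 1) → Fin n → ℝ}
    (hv : AffineIndependent ℝ v) : AffineBasis (Fin (n + 1)) ℝ (Fin n → ℝ) :=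
  ⟨v, hv, hv.affineSpan_eq_top_iff_card_eq_finrank_add_one.mpr (by simp)⟩

@[simp]
theorem AffineIndependent.coe_affineBasis {n : ℕ} {v : Fin (n + 1) → Fin n → ℝ}
    (hv : AffineIndependent ℝ v) : ⇑hv.affineBasis = v :=
  rfl

theorem AffineBasis.indicator_convexHull_eq_ite {E : Type*} [AddCommGroup E] [Module ℝ E]
    (b : AffineBasis (Fin 3) ℝ E) (g : E → ℝ) (x : E) :
    (convexHull ℝ (Set.range b)).indicator g x =
      if 0 ≤ b.coord 0 x ∧ 0 ≤ b.coord 1 x ∧ 0 ≤ b.coord 2 x then g x else 0 := by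
  rw [b.convexHull_eq_nonneg_coord, Set.indicator_apply]
  exact if_congr (by simp [Fin.forall_fin_succ]) rfl rfl

theorem AffineMap.addHaar_preimage_zero_s9 {E : Type*} [NormedAddCommGroup E] [NormedSpace ℝ E]
    [MeasurableSpace E] [BorelSpace E] [FiniteDimensional ℝ E] (μ : Measure E)
    [μ.IsAddHaarMeasure] (φ : E →ᵃ[ℝ] ℝ) {y : E} (hy : φ y ≠ 0) : μ (φ ⁻¹' {0}) = 0 := by
  have hne : (affineSpan ℝ {(0 : ℝ)}).comap φ ≠ ⊤ := fun htop => by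
    have : y ∈ (affineSpan ℝ {(0 : ℝ)}).comap φ := htop ▸ AffineSubspace.mem_top ℝ E y
    rw [AffineSubspace.mem_comap, ← SetLike.mem_coe,
      AffineSubspace.coe_affineSpan_singleton] at this
    exact hy this
  simpa using Measure.addHaar_affineSubspace μ _ hne

theorem AffineBasis.addHaar_coord_preimage_zero {ι E : Type*} [NormedAddCommGroup E]
    [NormedSpace ℝ E] [MeasurableSpace E] [BorelSpace E] [FiniteDimensional ℝ E] (μ : Measure E)
    [μ.IsAddHaarMeasure] (b : AffineBasis ι ℝ E) (i : ι) : μ (b.coord i ⁻¹' {0}) = 0 :=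
  (b.coord i).addHaar_preimage_zero_s9 μ (y := b i) (by simp)

theorem tendsto_measure_inter_abs_lt {α : Type*} [MeasurableSpace α] {μ : Measure α}
    {s : Set α} (hsm : NullMeasurableSet s μ) (hs : μ s ≠ ∞) {φ : α → ℝ} (hφ : Measurable φ) :
    Tendsto (fun r => μ (s ∩ {x | |φ x| < r})) (𝓝[>] 0) (𝓝 (μ (s ∩ φ ⁻¹' {0}))) := by
  have hinter : ⋂ r > (0 : ℝ), s ∩ {x | |φ x| < r} = s ∩ φ ⁻¹' {0} := by
    ext x
    simp only [Set.mem_iInter, Set.mem_inter_iff, Set.mem_ofPred_eq, Set.mem_preimage,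
      Set.mem_singleton_iff]
    refine ⟨fun h => ⟨(h 1 one_pos).1, abs_eq_zero.mp ?_⟩, fun h r hr => ⟨h.1, by simpa [h.2]⟩⟩
    exact le_antisymm (le_of_forall_pos_lt_add fun r hr => by simpa using (h r hr).2)
      (abs_nonneg _)
  rw [← hinter]
  refine tendsto_measure_biInter_gt (fun r _ => ?_) (fun r r' _ hrr' => ?_) ⟨1, one_pos, ?_⟩
  · exact hsm.inter (measurableSet_lt hφ.abs measurable_const).nullMeasurableSet
  · exact Set.inter_subset_inter_right _ fun x hx => lt_of_lt_of_le hx hrr'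
  · exact ne_top_of_le_ne_top hs (measure_mono Set.inter_subset_left)

theorem exists_pos_measure_exists_abs_lt_lt {α ι : Type*} [MeasurableSpace α] [Fintype ι]
    {μ : Measure α} {s : Set α} (hsm : NullMeasurableSet s μ) (hs : μ s ≠ ∞)
    {φ : ι → α → ℝ} (hφ : ∀ i, Measurable (φ i)) (hnull : ∀ i, μ (s ∩ φ i ⁻¹' {0}) = 0)
    {δ : ℝ≥0∞} (hδ : 0 < δ) : ∃ ε > 0, μ {x | x ∈ s ∧ ∃ i, |φ i x| < ε} < δ := by
  have hlim : Tendsto (fun r => ∑ i, μ (s ∩ {x | |φ i x| < r})) (𝓝[>] 0) (𝓝 0) := by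
    simpa [hnull] using tendsto_finsetSum Finset.univ
      fun i _ => tendsto_measure_inter_abs_lt hsm hs (hφ i)
  obtain ⟨ε, hε, hεpos⟩ := ((hlim.eventually (gt_mem_nhds hδ)).and self_mem_nhdsWithin).exists
  refine ⟨ε, hεpos, lt_of_le_of_lt ?_ hε⟩
  calc μ {x | x ∈ s ∧ ∃ i, |φ i x| < ε} = μ (⋃ i, s ∩ {x | |φ i x| < ε}) := by
        congr 1; ext x; simp
    _ ≤ ∑ i, μ (s ∩ {x | |φ i x| < ε}) := measure_iUnion_fintype_le _ _

/-- The unit `σ(F - μ F')` of the theorem with `γ = (1, -μ, 0)`, `h = u`, `h' = -s`, `h'' = -q`. -/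
def gatedRelu (μ q s u : ℝ) : ℝ :=
  max (max (u - μ * max (-q) 0) 0 - μ * max (-s - μ * max (-q) 0) 0) 0

theorem gatedRelu_of_nonneg (μ : ℝ) {q s : ℝ} (hq : 0 ≤ q) (hs : 0 ≤ s) (u : ℝ) :
    gatedRelu μ q s u = max u 0 := by
  simp [gatedRelu, hq, hs]

theorem gatedRelu_eq_zero_of_nonpos_left {μ q s u : ℝ} (hμ : 0 ≤ μ) (hq : q ≤ 0)
    (hu : u + μ * q ≤ 0) : gatedRelu μ q s u = 0 := by
  have hinner : max (u - μ * max (-q) 0) 0 = 0 := by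
    rw [max_eq_left (by linarith : 0 ≤ -q)]; exact max_eq_right (by linarith)
  rw [gatedRelu, hinner, zero_sub, max_eq_right]
  exact neg_nonpos.mpr (mul_nonneg hμ (le_max_right _ _))

theorem gatedRelu_eq_zero_of_nonpos_right {μ q s u : ℝ} (hμ : 0 ≤ μ) (hq : 0 ≤ q) (hs : s ≤ 0)
    (hu : u + μ * s ≤ 0) : gatedRelu μ q s u = 0 := by
  have hμs : μ * s ≤ 0 := mul_nonpos_of_nonneg_of_nonpos hμ hs
  simp only [gatedRelu, max_eq_right (neg_nonpos.mpr hq), mul_zero, sub_zero,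
    max_eq_left (neg_nonneg.mpr hs)]
  exact max_eq_right (by rcases le_total u 0 with h | h <;> simp [h] <;> linarith)

theorem relu_add_sub_relu {a y : ℝ} (h : |a| ≤ |y|) :
    max (a + y) 0 - max y 0 = if 0 ≤ y then a else 0 := by
  split_ifs with hy
  · rw [abs_of_nonneg hy] at h
    rw [max_eq_left (by linarith [neg_abs_le a]), max_eq_left hy]; ring
  · rw [abs_of_neg (not_le.mp hy)] at h
    rw [max_eq_right (by linarith [le_abs_self a]), max_eq_right (not_le.mp hy).le]; ring

theorem gatedRelu_add_sub_gatedRelu {a p q s ε M μ : ℝ} (hM : 0 < M) (hμ : 0 ≤ μ)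
    (hp : ε ≤ |p|) (hq : ε ≤ |q|) (hs : ε ≤ |s|)
    (haM : |a| ≤ M * ε) (haμ : |a| + M * |p| ≤ μ * ε) :
    gatedRelu μ q s (a + M * p) - gatedRelu μ q s (M * p) =
      if 0 ≤ p ∧ 0 ≤ q ∧ 0 ≤ s then a else 0 := by
  have hMp : |M * p| = M * |p| := by rw [abs_mul, abs_of_pos hM]
  have hkill : ∀ u, |u| ≤ |a| + M * |p| → ∀ t, ε ≤ |t| → t < 0 → u + μ * t ≤ 0 := by
    intro u hu t ht htn
    rw [abs_of_neg htn] at ht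
    nlinarith [le_abs_self u, mul_le_mul_of_nonneg_left ht hμ]
  have hsum : |a + M * p| ≤ |a| + M * |p| := hMp ▸ abs_add_le _ _
  have hprod : |M * p| ≤ |a| + M * |p| := by linarith [abs_nonneg a]
  rcases lt_or_ge q 0 with hq0 | hq0
  · rw [gatedRelu_eq_zero_of_nonpos_left hμ hq0.le (hkill _ hsum q hq hq0),
      gatedRelu_eq_zero_of_nonpos_left hμ hq0.le (hkill _ hprod q hq hq0), sub_zero,
      if_neg fun h => hq0.not_ge h.2.1]
  rcases lt_or_ge s 0 with hs0 | hs0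
  · rw [gatedRelu_eq_zero_of_nonpos_right hμ hq0 hs0.le (hkill _ hsum s hs hs0),
      gatedRelu_eq_zero_of_nonpos_right hμ hq0 hs0.le (hkill _ hprod s hs hs0), sub_zero,
      if_neg fun h => hs0.not_ge h.2.2]
  rw [gatedRelu_of_nonneg μ hq0 hs0, gatedRelu_of_nonneg μ hq0 hs0,
    relu_add_sub_relu (haM.trans (by rw [hMp]; exact mul_le_mul_of_nonneg_left hp hM.le))]
  simp [mul_nonneg_iff_of_pos_left hM, hq0, hs0]

theorem exists_gatedRelu_add_sub_gatedRelu_eq_ite {Ca Cp ε : ℝ} (hε : 0 < ε) :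
    ∃ M μ : ℝ, 0 < M ∧ 0 < μ ∧ ∀ a p q s : ℝ, |a| ≤ Ca → |p| ≤ Cp →
      ε ≤ |p| → ε ≤ |q| → ε ≤ |s| →
      gatedRelu μ q s (a + M * p) - gatedRelu μ q s (M * p) =
        if 0 ≤ p ∧ 0 ≤ q ∧ 0 ≤ s then a else 0 := by
  set M := (|Ca| + 1) / ε
  set μ := (|Ca| + M * |Cp| + 1) / ε
  have hM : 0 < M := by positivity
  have hMε : M * ε = |Ca| + 1 := div_mul_cancel₀ _ hε.ne'
  have hμε : μ * ε = |Ca| + M * |Cp| + 1 := div_mul_cancel₀ _ hε.ne'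
  refine ⟨M, μ, hM, by positivity, fun a p q s ha hpC hp hq hs => ?_⟩
  have hMp : M * |p| ≤ M * |Cp| := mul_le_mul_of_nonneg_left (hpC.trans (le_abs_self _)) hM.le
  have ha' : |a| ≤ |Ca| := ha.trans (le_abs_self _)
  exact gatedRelu_add_sub_gatedRelu hM (by positivity) hp hq hs (by linarith) (by linarith)

theorem simplex_deep_representation_2d_general (B : ℝ)
    (v : Fin 3 → (Fin 2 → ℝ)) (hv : AffineIndependent ℝ v)
    (S : Set (Fin 2 → ℝ)) (hS : S = convexHull ℝ (Set.range v))
    (ℓ f : (Fin 2 → ℝ) → ℝ) (hℓ : IsAffineFn ℓ)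
    (hf : f = S.indicator ℓ) :
    ∀ δ > (0 : ℝ),
      ∃ (ρ γ₁ γ₂ γ₃ μ : Fin 3 → ℝ) (h h' h'' : Fin 3 → (Fin 2 → ℝ) → ℝ),
        (∀ k, 0 < μ k) ∧ (∀ k, IsAffineFn (h k)) ∧ (∀ k, IsAffineFn (h' k)) ∧
        (∀ k, IsAffineFn (h'' k)) ∧
        volume {x : Fin 2 → ℝ | x ∈ Set.Icc (fun _ => -B) (fun _ => (B : ℝ)) ∧
            (∑ k : Fin 3, ρ k *
              max (γ₁ k * max (h k x - μ k * max (h'' k x) 0) 0 +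
                   γ₂ k * max (h' k x - μ k * max (h'' k x) 0) 0 + γ₃ k) 0) ≠ f x} <
          ENNReal.ofReal δ := by
  intro δ hδ
  set box : Set (Fin 2 → ℝ) := Set.Icc (fun _ => -B) (fun _ => B)
  have hbox : IsCompact box := isCompact_Icc
  set L := hv.affineBasis.coord
  obtain ⟨ε, hε, hstrip⟩ := exists_pos_measure_exists_abs_lt_lt measurableSet_Icc.nullMeasurableSet
    hbox.measure_lt_top.ne (fun i => (L i).continuous_of_finiteDimensional.measurable)
    (fun i => measure_mono_null Set.inter_subset_right
      (hv.affineBasis.addHaar_coord_preimage_zero volume i)) (ENNReal.ofReal_pos.mpr hδ)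
  obtain ⟨Cℓ, hCℓ⟩ := hbox.exists_bound_of_continuousOn hℓ.continuous.continuousOn
  obtain ⟨C₀, hC₀⟩ := hbox.exists_bound_of_continuousOn
    (L 0).continuous_of_finiteDimensional.continuousOn
  obtain ⟨M, μ, hM, hμ, hrep⟩ := exists_gatedRelu_add_sub_gatedRelu_eq_ite (Ca := Cℓ) (Cp := C₀) hε
  refine ⟨![1, -1, 0], fun _ => 1, fun _ => -μ, fun _ => 0, fun _ => μ,
    ![ℓ + ⇑(M • L 0), ⇑(M • L 0), ⇑(M • L 0)], fun _ => ⇑(-L 2), fun _ => ⇑(-L 1),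
    fun _ => hμ, ?_, fun _ => AffineMap.isAffineFn _, fun _ => AffineMap.isAffineFn _, ?_⟩
  · intro k
    fin_cases k
    exacts [hℓ.add (AffineMap.isAffineFn _), AffineMap.isAffineFn _, AffineMap.isAffineFn _]
  refine lt_of_le_of_lt (measure_mono ?_) hstrip
  rintro x ⟨hxbox, hne⟩
  refine ⟨hxbox, ?_⟩
  by_contra! hfar
  apply hne
  rw [hf, hS, ← hv.coe_affineBasis, AffineBasis.indicator_convexHull_eq_ite,
    ← hrep _ _ _ _ (hCℓ x hxbox) (hC₀ x hxbox) (hfar 0) (hfar 1) (hfar 2)]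
  simp [Fin.sum_univ_three, gatedRelu, sub_eq_add_neg, L]

/-- The deep-network half of the two-dimensional simplex representation lemma:
the function `f` equal to the affine `ℓ` on a 2-simplex `S ⊆ [-B, B]²` and `0`
outside is represented, up to arbitrarily small Lebesgue measure, by
`g(x) = ∑ₖ ρₖ · σ(γ₁ₖ·Fₖ(x) + γ₂ₖ·Fₖ'(x) + γ₃ₖ)` with the fan-shaped terms
`Fₖ(x) = σ(hₖ(x) - μₖ·σ(hₖ''(x)))` and `Fₖ'(x) = σ(hₖ'(x) - μₖ·σ(hₖ''(x)))`.
Here `σ(u) = max u 0` is ReLU. -/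
theorem simplex_deep_representation_2d (B : ℝ) (hB : 1 ≤ B)
    (v : Fin 3 → (Fin 2 → ℝ)) (hv : AffineIndependent ℝ v)
    (S : Set (Fin 2 → ℝ)) (hS : S = convexHull ℝ (Set.range v))
    (hSB : S ⊆ Set.Icc (fun _ => -B) (fun _ => B))
    (ℓ f : (Fin 2 → ℝ) → ℝ) (hℓ : IsAffineFn ℓ)
    (hf : f = S.indicator ℓ) :
    ∀ δ > (0 : ℝ),
      ∃ (ρ γ₁ γ₂ γ₃ μ : Fin 3 → ℝ) (h h' h'' : Fin 3 → (Fin 2 → ℝ) → ℝ),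
        (∀ k, 0 < μ k) ∧ (∀ k, IsAffineFn (h k)) ∧ (∀ k, IsAffineFn (h' k)) ∧
        (∀ k, IsAffineFn (h'' k)) ∧
        volume {x : Fin 2 → ℝ | x ∈ Set.Icc (fun _ => -B) (fun _ => (B : ℝ)) ∧
            (∑ k : Fin 3, ρ k *
              max (γ₁ k * max (h k x - μ k * max (h'' k x) 0) 0 +
                   γ₂ k * max (h' k x - μ k * max (h'' k x) 0) 0 + γ₃ k) 0) ≠ f x} <
          ENNReal.ofReal δ :=
  simplex_deep_representation_2d_general B v hv S hS ℓ f hℓ hf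
end

section
/- Let n ≥ 1 be a natural number, let a₀, a₁, …, a_n be real numbers with aᵢ ≠ 0 for all 0 ≤ i ≤ n − 1, let x be a real number, and set bᵢ = aᵢ/a_{i−1} for 1 ≤ i ≤ n. Define g₀ = 0 and, for 0 ≤ l ≤ n − 1, g_{l+1} = b_{n−l}·x / (1 + b_{n−l}·x − g_l), assuming each denominator 1 + b_{n−l}·x − g_l is nonzero and also 1 − g_n ≠ 0. Then Σ_{i=0}^{n} aᵢ·xⁱ = a₀ / (1 − g_n). (This is the continued fraction representation of a polynomial used to link the wide factorized representation and the deep continued-fraction representation.) -/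
/-!
Write `Qₗ = ∑_{i ≤ l} a_{n-l+i} xⁱ` for the tail of the polynomial in Horner form, so that
`Q₀ = aₙ`, `Q_{l+1} = a_{n-l-1} + x Qₗ` and `Qₙ` is the whole polynomial. Each step of the
recursion for `g` multiplies `1 - g` by the reciprocal of its denominator, and this keeps the
invariant `(1 - gₗ) Qₗ = a_{n-l}`; at `l = n` it reads `(1 - gₙ) · ∑ aᵢ xⁱ = a₀`.
-/

open Finset

section

variable {K : Type*} [Field K]

theorem sum_range_succ_succ_horner (a : ℕ → K) (x : K) (m k : ℕ) :
    ∑ i ∈ range (k + 2), a (m + i) * x ^ i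
      = a m + x * ∑ i ∈ range (k + 1), a (m + 1 + i) * x ^ i := by
  rw [sum_range_succ', mul_sum, add_comm]
  simp only [add_zero, pow_zero, mul_one, pow_succ]
  congr 1
  refine sum_congr rfl fun i _ => ?_
  rw [← add_assoc, add_right_comm m 1 i]
  ring

theorem one_sub_cf_step_mul_horner_step {p q g Q x : K} (hp : p ≠ 0)
    (hD : 1 + q / p * x - g ≠ 0) (hQ : (1 - g) * Q = q) :
    (1 - q / p * x / (1 + q / p * x - g)) * (p + x * Q) = p := by
  have hD' : p + q * x - p * g ≠ 0 := by
    contrapose! hD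
    field_simp
    linear_combination hD
  field_simp
  linear_combination p * x * hQ

theorem one_sub_cf_mul_tail_eq (n : ℕ) (a : ℕ → K) (ha : ∀ i ≤ n - 1, a i ≠ 0) (x : K)
    (b : ℕ → K) (hb : ∀ i, 1 ≤ i → i ≤ n → b i = a i / a (i - 1))
    (g : ℕ → K) (hg0 : g 0 = 0)
    (hgs : ∀ l ≤ n - 1, g (l + 1) = b (n - l) * x / (1 + b (n - l) * x - g l))
    (hden : ∀ l ≤ n - 1, 1 + b (n - l) * x - g l ≠ 0) :
    ∀ l ≤ n, (1 - g l) * ∑ i ∈ range (l + 1), a (n - l + i) * x ^ i = a (n - l) := by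
  intro l
  induction l with
  | zero => simp [hg0]
  | succ l ih =>
    intro hl
    have hbl : b (n - l) = a (n - l) / a (n - (l + 1)) := by
      rw [hb (n - l) (by omega) (Nat.sub_le n l), show n - l - 1 = n - (l + 1) by omega]
    rw [hgs l (by omega), hbl, sum_range_succ_succ_horner, show n - (l + 1) + 1 = n - l by omega]
    exact one_sub_cf_step_mul_horner_step (ha _ (by omega)) (hbl ▸ hden l (by omega))
      (ih (by omega))

end

theorem continued_fraction_polynomial_general (n : ℕ) (a : ℕ → ℝ)
    (ha : ∀ i ≤ n - 1, a i ≠ 0) (x : ℝ) (b : ℕ → ℝ)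
    (hb : ∀ i, 1 ≤ i → i ≤ n → b i = a i / a (i - 1))
    (g : ℕ → ℝ) (hg0 : g 0 = 0)
    (hgs : ∀ l ≤ n - 1, g (l + 1) = b (n - l) * x / (1 + b (n - l) * x - g l))
    (hden : ∀ l ≤ n - 1, 1 + b (n - l) * x - g l ≠ 0)
    (hden' : 1 - g n ≠ 0) :
    ∑ i ∈ Finset.range (n + 1), a i * x ^ i = a 0 / (1 - g n) := by
  have h := one_sub_cf_mul_tail_eq n a ha x b hb g hg0 hgs hden n le_rfl
  simp only [Nat.sub_self, zero_add] at h
  rw [eq_div_iff hden', ← h, mul_comm]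

/-- The continued fraction representation of a polynomial `∑ aᵢxⁱ`:
with `bᵢ = aᵢ/a_{i-1}` and the inside-out recursion `g 0 = 0`,
`g (l+1) = b (n-l)·x / (1 + b (n-l)·x - g l)`, one has
`∑_{i=0}^n aᵢ xⁱ = a₀ / (1 - g n)`, provided all denominators are nonzero. -/
theorem continued_fraction_polynomial (n : ℕ) (hn : 1 ≤ n) (a : ℕ → ℝ)
    (ha : ∀ i ≤ n - 1, a i ≠ 0) (x : ℝ) (b : ℕ → ℝ)
    (hb : ∀ i, 1 ≤ i → i ≤ n → b i = a i / a (i - 1))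
    (g : ℕ → ℝ) (hg0 : g 0 = 0)
    (hgs : ∀ l ≤ n - 1, g (l + 1) = b (n - l) * x / (1 + b (n - l) * x - g l))
    (hden : ∀ l ≤ n - 1, 1 + b (n - l) * x - g l ≠ 0)
    (hden' : 1 - g n ≠ 0) :
    ∑ i ∈ Finset.range (n + 1), a i * x ^ i = a 0 / (1 - g n) :=
  continued_fraction_polynomial_general n a ha x b hb g hg0 hgs hden hden'
end

section
/- For δ > 0 let h_δ : ℝ → ℝ be the trapezoid bump h_δ(t) = max(0, min(1, 2 − |t|/δ)), which equals 1 on [−δ, δ], equals 0 outside [−2δ, 2δ], and is linear on the two ramps. Let n ≥ 1 and f : [0,1]^n → ℝ be continuous. Then for every ε > 0 there exist δ > 0, a natural number L ≥ 1, and points a¹, …, a^L ∈ [0,1]^n such that ∫_{[0,1]^n} | f(x) − Σ_{l=1}^{L} f(a^l) · Π_{i=1}^{n} h_δ(xᵢ − a^l_i) | dx < ε. (The explicit trapezoid-product construction realizes the partially separable representation of any continuous function in the L¹ sense.) -/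
/-!
Take `δ = 1 / (3K + 1)` with `2δ` below a modulus of uniform continuity of `f` for `ε / 2`, and
put nodes on the grid `3δ · {0, …, K}ⁿ ⊆ [0,1]ⁿ`. Since `h_δ = R(· + 2δ) - R(· - δ)` for the ramp
`R` rising from `0` to `1` on `[0, δ]`, the translates `h_δ(· - 3δk)` telescope to `1` on
`[-δ, (3K+1)δ]`, so the products form a partition of unity on the cube. A product vanishes unless
`‖x - aˡ‖_∞ < 2δ`, so the combination is a convex average of values `f(aˡ)` that are `ε / 2`-close
to `f x`; the cube has volume `1`.
-/

open MeasureTheory Finset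

noncomputable def trapezoid (δ t : ℝ) : ℝ := max 0 (min 1 (2 - |t| / δ))

noncomputable def ramp (δ t : ℝ) : ℝ := max 0 (min 1 (t / δ))

section

variable {δ : ℝ}

lemma ramp_of_nonpos (hδ : 0 < δ) {t : ℝ} (ht : t ≤ 0) : ramp δ t = 0 :=
  max_eq_left <| (min_le_right _ _).trans (div_nonpos_of_nonpos_of_nonneg ht hδ.le)

lemma ramp_of_le (hδ : 0 < δ) {t : ℝ} (ht : δ ≤ t) : ramp δ t = 1 := by
  rw [ramp, min_eq_left ((one_le_div hδ).2 ht), max_eq_right zero_le_one]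

lemma trapezoid_eq_ramp_sub_ramp (hδ : 0 < δ) (t : ℝ) :
    trapezoid δ t = ramp δ (t + 2 * δ) - ramp δ (t - δ) := by
  have h₁ : (t + 2 * δ) / δ = t / δ + 2 := by field_simp
  have h₂ : (t - δ) / δ = t / δ - 1 := by field_simp
  rw [trapezoid, ramp, ramp, h₁, h₂, ← abs_of_pos hδ, ← abs_div, abs_of_pos hδ]
  simp only [abs, max_def, min_def]
  split_ifs <;> linarith

lemma trapezoid_nonneg (t : ℝ) : 0 ≤ trapezoid δ t := le_max_left _ _

lemma abs_lt_of_trapezoid_ne_zero (hδ : 0 < δ) {t : ℝ} (ht : trapezoid δ t ≠ 0) :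
    |t| < 2 * δ := by
  by_contra! h
  refine ht (max_eq_left ((min_le_right _ _).trans ?_))
  rw [sub_nonpos, le_div_iff₀ hδ]
  linarith

lemma sum_range_trapezoid_eq_one (hδ : 0 < δ) (K : ℕ) {t : ℝ} (ht₀ : -δ ≤ t)
    (ht₁ : t ≤ (3 * K + 1) * δ) :
    ∑ k ∈ range (K + 1), trapezoid δ (t - 3 * δ * k) = 1 := by
  set g : ℕ → ℝ := fun k => ramp δ (t + 2 * δ - 3 * δ * k)
  have hg : ∀ k : ℕ, trapezoid δ (t - 3 * δ * k) = g k - g (k + 1) := fun k => by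
    rw [trapezoid_eq_ramp_sub_ramp hδ]
    push_cast [g]
    ring_nf
  rw [sum_congr rfl fun k _ => hg k, sum_range_sub']
  simp only [g]
  rw [ramp_of_le hδ (by simp; linarith), ramp_of_nonpos hδ (by push_cast; linarith), sub_zero]

end

section

variable {ι : Type*} [Fintype ι] {δ : ℝ}

lemma sum_prod_trapezoid_grid_eq_one [DecidableEq ι] (hδ : 0 < δ) (K : ℕ) {x : ι → ℝ}
    (hx : ∀ i, -δ ≤ x i ∧ x i ≤ (3 * K + 1) * δ) :
    ∑ v : ι → Fin (K + 1), ∏ i, trapezoid δ (x i - 3 * δ * (v i : ℕ)) = 1 := by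
  rw [← Fintype.prod_sum fun i (k : Fin (K + 1)) => trapezoid δ (x i - 3 * δ * (k : ℕ))]
  refine prod_eq_one fun i _ => ?_
  rw [Fin.sum_univ_eq_sum_range (fun k => trapezoid δ (x i - 3 * δ * k))]
  exact sum_range_trapezoid_eq_one hδ K (hx i).1 (hx i).2

lemma dist_lt_of_prod_trapezoid_ne_zero (hδ : 0 < δ) {x y : ι → ℝ}
    (h : ∏ i, trapezoid δ (x i - y i) ≠ 0) : dist x y < 2 * δ := by
  rw [dist_pi_lt_iff (by positivity)]
  exact fun i => abs_lt_of_trapezoid_ne_zero hδ (prod_ne_zero_iff.1 h i (mem_univ i))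

lemma setIntegral_Icc_zero_one_abs_le {g : (ι → ℝ) → ℝ} {C : ℝ}
    (hg : ∀ x ∈ Set.Icc 0 1, |g x| ≤ C) : ∫ x in Set.Icc (0 : ι → ℝ) 1, |g x| ≤ C := by
  have hvol : volume (Set.Icc (0 : ι → ℝ) 1) = 1 := by simp [Real.volume_Icc_pi]
  calc ∫ x in Set.Icc (0 : ι → ℝ) 1, |g x|
      ≤ ‖∫ x in Set.Icc (0 : ι → ℝ) 1, |g x|‖ := Real.le_norm_self _
    _ ≤ C * volume.real (Set.Icc (0 : ι → ℝ) 1) :=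
        norm_setIntegral_le_of_norm_le_const (by simp [hvol]) (by simpa using hg)
    _ = C := by simp [Measure.real, hvol]

end

lemma abs_sub_sum_mul_le_of_sum_eq_one {ι : Type*} (s : Finset ι) {w c : ι → ℝ} {y η : ℝ}
    (hw : ∀ l ∈ s, 0 ≤ w l) (hsum : ∑ l ∈ s, w l = 1)
    (hc : ∀ l ∈ s, w l ≠ 0 → |y - c l| ≤ η) :
    |y - ∑ l ∈ s, c l * w l| ≤ η := by
  have hterm : ∀ l ∈ s, |(y - c l) * w l| ≤ η * w l := fun l hl => by
    rw [abs_mul, abs_of_nonneg (hw l hl)]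
    rcases eq_or_ne (w l) 0 with h | h
    · simp [h]
    · exact mul_le_mul_of_nonneg_right (hc l hl h) (hw l hl)
  calc |y - ∑ l ∈ s, c l * w l| = |∑ l ∈ s, (y - c l) * w l| := by
        simp only [sub_mul, sum_sub_distrib, ← mul_sum, hsum, mul_one]
    _ ≤ ∑ l ∈ s, η * w l := (abs_sum_le_sum_abs _ _).trans (sum_le_sum hterm)
    _ = η := by rw [← mul_sum, hsum, mul_one]

theorem trapezoid_product_representation_general (n : ℕ)
    (f : (Fin n → ℝ) → ℝ) (hf : ContinuousOn f (Set.Icc 0 1)) :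
    ∀ ε > (0 : ℝ), ∃ δ > (0 : ℝ), ∃ L : ℕ, 1 ≤ L ∧
      ∃ a : Fin L → Fin n → ℝ,
        (∀ l, a l ∈ Set.Icc (0 : Fin n → ℝ) 1) ∧
        (∫ x in Set.Icc (0 : Fin n → ℝ) 1,
            |f x - ∑ l, f (a l) * ∏ i, max 0 (min 1 (2 - |x i - a l i| / δ))|) < ε := by
  intro ε hε
  obtain ⟨d, hd, hfd⟩ := Metric.uniformContinuousOn_iff.1
    (isCompact_Icc.uniformContinuousOn_of_continuous hf) (ε / 2) (half_pos hε)
  obtain ⟨K, hK⟩ := exists_nat_gt (2 / d)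
  set δ : ℝ := 1 / (3 * K + 1)
  have hδ : 0 < δ := by positivity
  have hKδ : (3 * K + 1) * δ = 1 := mul_one_div_cancel (by positivity)
  have hδd : 2 * δ < d := by
    rw [div_lt_iff₀ hd] at hK
    nlinarith
  let e := Fintype.equivFin (Fin n → Fin (K + 1))
  let a : Fin _ → Fin n → ℝ := fun l i => 3 * δ * (e.symm l i : ℕ)
  have ha : ∀ l, a l ∈ Set.Icc 0 1 := fun l => by
    refine ⟨fun i => by positivity, fun i => ?_⟩
    have : ((e.symm l i : ℕ) : ℝ) ≤ K := by exact_mod_cast (e.symm l i).is_le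
    simp only [a, Pi.one_apply]
    nlinarith
  refine ⟨δ, hδ, _, Fintype.card_pos, a, ha, ?_⟩
  refine (setIntegral_Icc_zero_one_abs_le fun x hx => ?_).trans_lt (half_lt_self hε)
  rw [← e.sum_comp]
  refine abs_sub_sum_mul_le_of_sum_eq_one _ (fun v _ => prod_nonneg fun i _ => trapezoid_nonneg _)
    ?_ fun v _ hv => ?_
  · simp only [a, Equiv.symm_apply_apply]
    exact sum_prod_trapezoid_grid_eq_one hδ K fun i =>
      ⟨by linarith [show 0 ≤ x i from hx.1 i], by linarith [show x i ≤ 1 from hx.2 i]⟩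
  · rw [← Real.dist_eq]
    exact (hfd x hx _ (ha _) ((dist_lt_of_prod_trapezoid_ne_zero hδ hv).trans hδd)).le

/-- The explicit trapezoid-product construction realizes the partially separable
representation of any continuous function on the unit cube in the `L¹` sense:
with the trapezoid bump `h_δ(t) = max 0 (min 1 (2 - |t|/δ))`, the combination
`∑_l f(aˡ) ∏_i h_δ(xᵢ - aˡᵢ)` approximates `f` arbitrarily well. -/
theorem trapezoid_product_representation (n : ℕ) (hn : 1 ≤ n)
    (f : (Fin n → ℝ) → ℝ) (hf : ContinuousOn f (Set.Icc 0 1)) :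
    ∀ ε > (0 : ℝ), ∃ δ > (0 : ℝ), ∃ L : ℕ, 1 ≤ L ∧
      ∃ a : Fin L → Fin n → ℝ,
        (∀ l, a l ∈ Set.Icc (0 : Fin n → ℝ) 1) ∧
        (∫ x in Set.Icc (0 : Fin n → ℝ) 1,
            |f x - ∑ l, f (a l) * ∏ i, max 0 (min 1 (2 - |x i - a l i| / δ))|) < ε :=
  trapezoid_product_representation_general n f hf
end
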